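/- Abstract Kochen–Specker no-go for weak representations: Let O be a finite index set of 'projections', let Orth ⊆ O × O be a symmetric irreflexive 'orthogonality' relation, and let B be a collection of finite subsets of O ('bases'). Suppose there is no function f : O → {0,1} assigning 1 to exactly one element of each basis in B. Let (X, Σ, μ) be a weak probability space with μ real-valued, and E : O → Σ a map such that (i) for each basis Q ∈ B, ∑_{P∈Q} μ(E(P)) = 1 and μ(X \ ⋃_{P∈Q} E(P)) = 0 with ⋃_{P∈Q} E(P) ∈ Σ, and (ii) for each orthogonal pair (P, P') ∈ Orth, E(P) ∩ E(P') ∈ Σ and μ(E(P) ∩ E(P')) = 0, where every pair of distinct elements of any basis is orthogonal. Then (X, Σ, μ) has a finite null cover: there is a finite collection of measure-zero sets in Σ whose union is X. -/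
import Mathlib


/-- Abstract Kochen–Specker no-go theorem for weak hidden variable representations:
if there is no {0,1}-valuation assigning 1 to exactly one element of each basis, then any
weak probability space representing the experiment has a finite null cover. -/
theorem abstract_KS_finite_null_cover {O : Type*} [Fintype O] [DecidableEq O]
    (Orth : O → O → Prop)
    (hsymm : ∀ P P', Orth P P' → Orth P' P)
    (hirrefl : ∀ P, ¬ Orth P P)
    (bases : Finset (Finset O))
    (hKS : ¬ ∃ f : O → Bool, ∀ Q ∈ bases, ∃! P, P ∈ Q ∧ f P = true)
    {X : Type*} [Nonempty X] (S : Set (Set X)) (μ : Set X → ℝ)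
    (E : O → Set X) (hE : ∀ P, E P ∈ S)
    (hbasisOrth : ∀ Q ∈ bases, ∀ P ∈ Q, ∀ P' ∈ Q, P ≠ P' → Orth P P')
    (hbasisSum : ∀ Q ∈ bases, ∑ P ∈ Q, μ (E P) = 1)
    (hbasisUnionMem : ∀ Q ∈ bases, (⋃ P ∈ Q, E P) ∈ S)
    (hbasisComplMem : ∀ Q ∈ bases, (Set.univ \ ⋃ P ∈ Q, E P) ∈ S)
    (hbasisComplNull : ∀ Q ∈ bases, μ (Set.univ \ ⋃ P ∈ Q, E P) = 0)
    (hOrthMem : ∀ P P', Orth P P' → E P ∩ E P' ∈ S)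
    (hOrthNull : ∀ P P', Orth P P' → μ (E P ∩ E P') = 0) :
    ∃ (m : ℕ) (B : Fin m → Set X),
      (∀ i, B i ∈ S) ∧ (∀ i, μ (B i) = 0) ∧ (⋃ i, B i) = Set.univ := by
  classical
  -- bases is nonempty, else the trivially false valuation would exist
  obtain ⟨Q₀, hQ₀⟩ : ∃ Q, Q ∈ bases := by
    by_contra h
    push_neg at h
    exact hKS ⟨fun _ => false, fun Q hQ => absurd hQ (h Q)⟩
  set D : Set X := Set.univ \ ⋃ P ∈ Q₀, E P with hD
  have hDmem : D ∈ S := hbasisComplMem Q₀ hQ₀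
  have hDnull : μ D = 0 := hbasisComplNull Q₀ hQ₀
  -- the indexing type
  set I := (Finset O ⊕ O × O) with hI
  let g : I → Set X := fun i =>
    match i with
    | Sum.inl Q => if Q ∈ bases then Set.univ \ ⋃ P ∈ Q, E P else D
    | Sum.inr (P, P') => if Orth P P' then E P ∩ E P' else D
  have hgmem : ∀ i, g i ∈ S := by
    rintro (Q | ⟨P, P'⟩)
    · by_cases h : Q ∈ bases
      · simpa [g, h] using hbasisComplMem Q h
      · simpa [g, h] using hDmem
    · by_cases h : Orth P P'
      · simpa [g, h] using hOrthMem P P' h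
      · simpa [g, h] using hDmem
  have hgnull : ∀ i, μ (g i) = 0 := by
    rintro (Q | ⟨P, P'⟩)
    · by_cases h : Q ∈ bases
      · simpa [g, h] using hbasisComplNull Q h
      · simpa [g, h] using hDnull
    · by_cases h : Orth P P'
      · simpa [g, h] using hOrthNull P P' h
      · simpa [g, h] using hDnull
  have hcover : (⋃ i, g i) = Set.univ := by
    apply Set.eq_univ_of_forall
    intro x
    push_neg at hKS
    obtain ⟨Q, hQ, hnu⟩ := hKS (fun P => decide (x ∈ E P))
    by_cases hex : ∃ P ∈ Q, x ∈ E P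
    · obtain ⟨P, hPQ, hxP⟩ := hex
      have : ¬ ∀ y, (y ∈ Q ∧ decide (x ∈ E y) = true) → y = P := by
        intro hall
        exact hnu ⟨P, ⟨hPQ, by simp [hxP]⟩, hall⟩
      push_neg at this
      obtain ⟨P', ⟨hP'Q, hxP'⟩, hne⟩ := this
      have hxP' : x ∈ E P' := by simpa using hxP'
      have horth : Orth P P' := hbasisOrth Q hQ P hPQ P' hP'Q (fun h => hne h.symm)
      refine Set.mem_iUnion.2 ⟨Sum.inr (P, P'), ?_⟩
      simp only [g, if_pos horth]
      exact ⟨hxP, hxP'⟩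
    · push_neg at hex
      refine Set.mem_iUnion.2 ⟨Sum.inl Q, ?_⟩
      simp only [g, if_pos hQ]
      refine ⟨trivial, ?_⟩
      simp only [Set.mem_iUnion]
      rintro ⟨P, hP, hx⟩
      exact hex P hP (by simpa using hx)
  -- reindex by Fin
  have : Fintype I := by infer_instance
  refine ⟨Fintype.card I, g ∘ (Fintype.equivFin I).symm, fun i => hgmem _, fun i => hgnull _, ?_⟩
  rw [← hcover]
  exact Function.Surjective.iUnion_comp (Fintype.equivFin I).symm.surjective g
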